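/- arXiv:2311.16582 — 4 statements merged into one kernel-verified Lean document; each statement's English description precedes it below -/
import Mathlib

section
/- Let N ≥ 2, let p_1,…,p_N be positive reals and x_1 > x_2 > ⋯ > x_N be reals. Define the N×N symmetric matrix 𝒜 with entries 𝒜_{ij} := √(p_i p_j) e^{(x_{max(i,j)} − x_{min(i,j)})/2}, and define the N×N symmetric tridiagonal matrix A with diagonal entries a_1 := 1/(p_1(1 − e^{x_2−x_1})), a_i := (1/p_i)(1 − e^{x_{i+1}−x_{i−1}})/((1 − e^{x_i−x_{i−1}})(1 − e^{x_{i+1}−x_i})) for 2 ≤ i ≤ N−1, a_N := 1/(p_N(1 − e^{x_N−x_{N−1}})), off-diagonal entries A_{i,i+1} = A_{i+1,i} = b_i := −(1/√(p_i p_{i+1})) e^{(x_{i+1}−x_i)/2}/(1 − e^{x_{i+1}−x_i}) for 1 ≤ i ≤ N−1, and all other entries zero. Then A·𝒜 = I, i.e. A = 𝒜^{−1}. -/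
open Finset

noncomputable def calA (N : ℕ) (p x : ℕ → ℝ) : Matrix (Fin N) (Fin N) ℝ :=
  Matrix.of fun i j =>
    Real.sqrt (p (i.1 + 1) * p (j.1 + 1)) *
      Real.exp ((x (max (i.1 + 1) (j.1 + 1)) - x (min (i.1 + 1) (j.1 + 1))) / 2)

noncomputable def aDiag (N : ℕ) (p x : ℕ → ℝ) (k : ℕ) : ℝ :=
  if k = 1 then 1 / (p 1 * (1 - Real.exp (x 2 - x 1)))
  else if k = N then 1 / (p N * (1 - Real.exp (x N - x (N - 1))))
  else (1 / p k) * (1 - Real.exp (x (k + 1) - x (k - 1))) /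
    ((1 - Real.exp (x k - x (k - 1))) * (1 - Real.exp (x (k + 1) - x k)))

noncomputable def bOff (p x : ℕ → ℝ) (k : ℕ) : ℝ :=
  -(1 / Real.sqrt (p k * p (k + 1))) * Real.exp ((x (k + 1) - x k) / 2) /
    (1 - Real.exp (x (k + 1) - x k))

noncomputable def triA (N : ℕ) (p x : ℕ → ℝ) : Matrix (Fin N) (Fin N) ℝ :=
  Matrix.of fun i j =>
    if i.1 = j.1 then aDiag N p x (i.1 + 1)
    else if j.1 = i.1 + 1 then bOff p x (i.1 + 1)
    else if i.1 = j.1 + 1 then bOff p x (j.1 + 1)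
    else 0

lemma fin_sum_ite {N : ℕ} (P : Prop) [Decidable P] (m : ℕ) (g : Fin N → ℝ) :
    (∑ j : Fin N, if j.1 = m ∧ P then g j else 0)
      = if h : m < N ∧ P then g ⟨m, h.1⟩ else 0 := by
  split_ifs with h
  · rw [Finset.sum_eq_single (⟨m, h.1⟩ : Fin N)]
    · simp [h.2]
    · intro j _ hj; rw [if_neg]; rintro ⟨h1, -⟩; exact hj (Fin.ext h1)
    · simp
  · apply Finset.sum_eq_zero; intro j _
    rw [if_neg]; rintro ⟨h1, h2⟩; exact h ⟨h1 ▸ j.2, h2⟩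

set_option maxHeartbeats 2000000 in
theorem stmt1 (N : ℕ) (hN : 2 ≤ N) (p x : ℕ → ℝ)
    (hp : ∀ i, 1 ≤ i → i ≤ N → 0 < p i)
    (hx : ∀ i, 1 ≤ i → i < N → x (i + 1) < x i) :
    triA N p x * calA N p x = 1 := by
  -- exp rewriting lemmas
  have hy1 : ∀ a b : ℕ, Real.exp ((x a - x b) / 2)
      = Real.exp (x a / 2) / Real.exp (x b / 2) := by
    intro a b; rw [← Real.exp_sub]; congr 1; ring
  have hy2 : ∀ a b : ℕ, Real.exp (x a - x b)
      = Real.exp (x a / 2) ^ 2 / Real.exp (x b / 2) ^ 2 := by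
    intro a b
    rw [sq, sq, ← Real.exp_add, ← Real.exp_add, ← Real.exp_sub]
    congr 1; ring
  have hsq : ∀ a b : ℕ, 1 ≤ a → a ≤ N → Real.sqrt (p a * p b)
      = Real.sqrt (p a) * Real.sqrt (p b) := by
    intro a b ha ha'
    exact Real.sqrt_mul (hp a ha ha').le _
  have hqpos : ∀ a, 1 ≤ a → a ≤ N → 0 < Real.sqrt (p a) := by
    intro a ha ha'; exact Real.sqrt_pos.2 (hp a ha ha')
  have hEpos : ∀ a : ℕ, 0 < Real.exp (x a / 2) := fun a => Real.exp_pos _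
  have hElt : ∀ a, 1 ≤ a → a < N →
      Real.exp (x (a+1) / 2) < Real.exp (x a / 2) := by
    intro a ha ha'
    exact Real.exp_lt_exp.2 (by linarith [hx a ha ha'])
  ext i k
  rw [Matrix.mul_apply, Matrix.one_apply]
  obtain ⟨m, hmlt⟩ := i
  obtain ⟨n, hnlt⟩ := k
  -- row decomposition
  have hdec : ∑ j : Fin N, triA N p x ⟨m, hmlt⟩ j * calA N p x j ⟨n, hnlt⟩
      = (if h : m - 1 < N ∧ 1 ≤ m then
          bOff p x m * calA N p x ⟨m-1, h.1⟩ ⟨n, hnlt⟩ else 0)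
      + (if h : m < N ∧ True then
          aDiag N p x (m+1) * calA N p x ⟨m, h.1⟩ ⟨n, hnlt⟩ else 0)
      + (if h : m + 1 < N ∧ True then
          bOff p x (m+1) * calA N p x ⟨m+1, h.1⟩ ⟨n, hnlt⟩ else 0) := by
    have e1 := fin_sum_ite (N := N) (1 ≤ m) (m - 1)
      (fun j => bOff p x m * calA N p x j ⟨n, hnlt⟩)
    have e2 := fin_sum_ite (N := N) True m
      (fun j => aDiag N p x (m+1) * calA N p x j ⟨n, hnlt⟩)
    have e3 := fin_sum_ite (N := N) True (m + 1)
      (fun j => bOff p x (m+1) * calA N p x j ⟨n, hnlt⟩)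
    rw [← e1, ← e2, ← e3, ← Finset.sum_add_distrib, ← Finset.sum_add_distrib]
    apply Finset.sum_congr rfl
    intro j _
    simp only [triA, Matrix.of_apply, and_true]
    split_ifs <;>
      first
        | (exfalso; omega)
        | ring1
        | (have hji : (m : ℕ) = j.1 + 1 := by omega
           rw [hji]; ring1)
  rw [hdec]
  -- calA entry values
  have hA : ∀ (a b : ℕ) (ha : a < N) (hb : b < N), b ≤ a →
      calA N p x ⟨a, ha⟩ ⟨b, hb⟩
        = Real.sqrt (p (a+1)) * Real.sqrt (p (b+1)) *
          (Real.exp (x (a+1) / 2) / Real.exp (x (b+1) / 2)) := by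
    intro a b ha hb hba
    simp only [calA, Matrix.of_apply]
    rw [max_eq_left (by omega), min_eq_right (by omega), hy1,
      hsq (a+1) (b+1) (by omega) (by omega)]
  have hA' : ∀ (a b : ℕ) (ha : a < N) (hb : b < N), a ≤ b →
      calA N p x ⟨a, ha⟩ ⟨b, hb⟩
        = Real.sqrt (p (a+1)) * Real.sqrt (p (b+1)) *
          (Real.exp (x (b+1) / 2) / Real.exp (x (a+1) / 2)) := by
    intro a b ha hb hab
    simp only [calA, Matrix.of_apply]
    rw [max_eq_right (by omega), min_eq_left (by omega), hy1,
      hsq (a+1) (b+1) (by omega) (by omega)]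
  -- bOff values
  have hb : ∀ a, 1 ≤ a → a < N → bOff p x a
      = -(1 / (Real.sqrt (p a) * Real.sqrt (p (a+1)))) *
          (Real.exp (x (a+1) / 2) / Real.exp (x a / 2)) /
        (1 - Real.exp (x (a+1) / 2) ^ 2 / Real.exp (x a / 2) ^ 2) := by
    intro a ha ha'
    rw [bOff, hsq a (a+1) (by omega) (by omega), hy1, hy2]
  -- aDiag values
  have ha1 : aDiag N p x 1
      = 1 / (Real.sqrt (p 1) ^ 2 *
          (1 - Real.exp (x 2 / 2) ^ 2 / Real.exp (x 1 / 2) ^ 2)) := by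
    rw [aDiag, if_pos rfl, hy2, Real.sq_sqrt (hp 1 (by omega) (by omega)).le]
  have haN : aDiag N p x N
      = 1 / (Real.sqrt (p N) ^ 2 *
          (1 - Real.exp (x N / 2) ^ 2 / Real.exp (x (N-1) / 2) ^ 2)) := by
    rw [aDiag, if_neg (by omega), if_pos rfl, hy2,
      Real.sq_sqrt (hp N (by omega) (by omega)).le]
  have haI : ∀ a, 2 ≤ a → a < N → aDiag N p x a
      = (1 / Real.sqrt (p a) ^ 2) *
          (1 - Real.exp (x (a+1) / 2) ^ 2 / Real.exp (x (a-1) / 2) ^ 2) /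
        ((1 - Real.exp (x a / 2) ^ 2 / Real.exp (x (a-1) / 2) ^ 2) *
         (1 - Real.exp (x (a+1) / 2) ^ 2 / Real.exp (x a / 2) ^ 2)) := by
    intro a ha ha'
    rw [aDiag, if_neg (by omega), if_neg (by omega), hy2, hy2, hy2,
      Real.sq_sqrt (hp a (by omega) (by omega)).le]
  -- case analysis on the row
  by_cases h0 : m = 0
  · subst h0
    rw [dif_neg (by omega), dif_pos ⟨hmlt, trivial⟩, dif_pos ⟨by omega, trivial⟩]
    by_cases hn0 : n = 0
    · subst hn0
      rw [if_pos rfl]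
      rw [ha1, hb 1 (by omega) (by omega), hA 0 0 (by omega) (by omega) le_rfl,
        hA 1 0 (by omega) (by omega) (by omega)]
      have e1 := hEpos 1; have e2 := hEpos 2
      have q1 := hqpos 1 (by omega) (by omega)
      have q2 := hqpos 2 (by omega) (by omega)
      have h21 : x 2 < x 1 := by
        have := hx 1 (by omega) (by omega); norm_num at this; exact this
      have hlt : Real.exp (x 2 / 2) < Real.exp (x 1 / 2) :=
        Real.exp_lt_exp.2 (by linarith)
      norm_num
      have hd : Real.exp (x 1 / 2) ^ 2 - Real.exp (x 2 / 2) ^ 2 ≠ 0 := by nlinarith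
      have hd' : (1:ℝ) - Real.exp (x 2 / 2) ^ 2 / Real.exp (x 1 / 2) ^ 2 ≠ 0 := by
        rw [sub_ne_zero]
        intro h
        apply hd
        field_simp at h
        nlinarith
      field_simp
      ring
    · rw [if_neg (by simp [Fin.ext_iff]; omega)]
      rw [ha1, hb 1 (by omega) (by omega),
        hA' 0 n (by omega) (by omega) (by omega),
        hA' 1 n (by omega) (by omega) (by omega)]
      have h21 : x 2 < x 1 := by
        have := hx 1 (by omega) (by omega); norm_num at this; exact this
      have hlt : Real.exp (x 2 / 2) < Real.exp (x 1 / 2) :=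
        Real.exp_lt_exp.2 (by linarith)
      have e1 := hEpos 1; have e2 := hEpos 2; have en := hEpos (n+1)
      have q1 := hqpos 1 (by omega) (by omega)
      have q2 := hqpos 2 (by omega) (by omega)
      have qn := hqpos (n+1) (by omega) (by omega)
      norm_num
      have hd : Real.exp (x 1 / 2) ^ 2 - Real.exp (x 2 / 2) ^ 2 ≠ 0 := by nlinarith
      have hd' : (1:ℝ) - Real.exp (x 2 / 2) ^ 2 / Real.exp (x 1 / 2) ^ 2 ≠ 0 := by
        rw [sub_ne_zero]
        intro h
        apply hd
        field_simp at h
        nlinarith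
      field_simp
      ring
  · by_cases hNm : m = N - 1
    · rw [dif_pos ⟨by omega, by omega⟩, dif_pos ⟨hmlt, trivial⟩,
        dif_neg (by omega)]
      subst hNm
      have c1 : N - 1 + 1 = N := by omega
      have c2 : N - 2 + 1 = N - 1 := by omega
      have c3 : N - 1 - 1 = N - 2 := by omega
      have hltN : Real.exp (x N / 2) < Real.exp (x (N-1) / 2) := by
        have := hElt (N-1) (by omega) (by omega)
        rwa [c1] at this
      have eN := hEpos N; have eN1 := hEpos (N-1)
      have qN := hqpos N (by omega) (by omega)
      have qN1 := hqpos (N-1) (by omega) (by omega)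
      have hd : Real.exp (x (N-1) / 2) ^ 2 - Real.exp (x N / 2) ^ 2 ≠ 0 := by
        nlinarith
      have c4 : N - 1 - 1 + 1 = N - 1 := by omega
      by_cases hnN : n = N - 1
      · subst hnN
        rw [if_pos rfl]
        simp only [c1]
        rw [haN, hb (N-1) (by omega) (by omega),
          hA' (N-1-1) (N-1) (by omega) (by omega) (by omega),
          hA' (N-1) (N-1) (by omega) (by omega) le_rfl]
        simp only [c1, c4]
        field_simp
        ring
      · rw [if_neg (by simp [Fin.ext_iff]; omega)]
        simp only [c1]
        rw [haN, hb (N-1) (by omega) (by omega),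
          hA (N-1-1) n (by omega) (by omega) (by omega),
          hA (N-1) n (by omega) (by omega) (by omega)]
        simp only [c1, c4]
        have en := hEpos (n+1)
        have qn := hqpos (n+1) (by omega) (by omega)
        field_simp
        ring
    · -- interior
      rw [dif_pos ⟨by omega, by omega⟩, dif_pos ⟨hmlt, trivial⟩,
        dif_pos ⟨by omega, trivial⟩]
      have c1 : m - 1 + 1 = m := by omega
      have c2 : m + 1 - 1 = m := by omega
      have c3 : m + 1 + 1 = m + 2 := by omega
      have hlt1 : Real.exp (x (m+1) / 2) < Real.exp (x m / 2) :=
        hElt m (by omega) (by omega)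
      have hlt2 : Real.exp (x (m+2) / 2) < Real.exp (x (m+1) / 2) := by
        have := hElt (m+1) (by omega) (by omega)
        rwa [c3] at this
      have em := hEpos m; have em1 := hEpos (m+1); have em2 := hEpos (m+2)
      have qm := hqpos m (by omega) (by omega)
      have qm1 := hqpos (m+1) (by omega) (by omega)
      have qm2 := hqpos (m+2) (by omega) (by omega)
      have hd1 : Real.exp (x m / 2) ^ 2 - Real.exp (x (m+1) / 2) ^ 2 ≠ 0 := by
        nlinarith
      have hd2 : Real.exp (x (m+1) / 2) ^ 2 - Real.exp (x (m+2) / 2) ^ 2 ≠ 0 := by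
        nlinarith
      rcases Nat.lt_trichotomy n m with hnm | hnm | hnm
      · rw [if_neg (by simp [Fin.ext_iff]; omega)]
        rw [haI (m+1) (by omega) (by omega), hb m (by omega) (by omega),
          hb (m+1) (by omega) (by omega),
          hA (m-1) n (by omega) (by omega) (by omega),
          hA m n (by omega) (by omega) (by omega),
          hA (m+1) n (by omega) (by omega) (by omega)]
        simp only [c1, c2, c3]
        have en := hEpos (n+1)
        have qn := hqpos (n+1) (by omega) (by omega)
        field_simp
        ring
      · subst hnm
        rw [if_pos rfl]
        rw [haI (n+1) (by omega) (by omega), hb n (by omega) (by omega),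
          hb (n+1) (by omega) (by omega),
          hA' (n-1) n (by omega) (by omega) (by omega),
          hA' n n (by omega) (by omega) le_rfl,
          hA (n+1) n (by omega) (by omega) (by omega)]
        simp only [c1, c2, c3]
        field_simp
        ring
      · rw [if_neg (by simp [Fin.ext_iff]; omega)]
        rw [haI (m+1) (by omega) (by omega), hb m (by omega) (by omega),
          hb (m+1) (by omega) (by omega),
          hA' (m-1) n (by omega) (by omega) (by omega),
          hA' m n (by omega) (by omega) (by omega),
          hA' (m+1) n (by omega) (by omega) (by omega)]
        simp only [c1, c2, c3]
        have en := hEpos (n+1)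
        have qn := hqpos (n+1) (by omega) (by omega)
        field_simp
        ring
end

section
/- Let N ≥ 1, let λ_1,…,λ_N be nonzero reals, c_1,…,c_N reals, and (δ^{(ℓ)})_{ℓ≥0} a real sequence. Define moments μ_i^{(s,n)} := Σ_{j=1}^N c_j λ_j^{i+s} Π_{ℓ=0}^{n−1} (λ_j + δ^{(ℓ)}) for i ∈ ℕ, s ∈ ℤ, n ∈ ℕ, and Hankel determinants τ_0^{(s,n)} := 1, τ_i^{(s,n)} := det(μ_{j+k}^{(s,n)})_{j,k=0}^{i−1} for i ≥ 1. Then for every s ∈ ℤ, n ∈ ℕ, and 1 ≤ i ≤ N: τ_i^{(s,n)} = Σ_{1 ≤ j_1 < j_2 < ⋯ < j_i ≤ N} { Π_{k=1}^{i} [ c_{j_k} λ_{j_k}^{s} Π_{ℓ=0}^{n−1} (λ_{j_k} + δ^{(ℓ)}) ] · Π_{1 ≤ k < ℓ ≤ i} (λ_{j_k} − λ_{j_ℓ})² }. -/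
open Finset

/-- Moments μ_i^{(s,n)} := Σ_{j=1}^N c_j λ_j^{i+s} Π_{ℓ=0}^{n−1}(λ_j + δ^{(ℓ)}). -/
noncomputable def mom (N : ℕ) (lam c : ℕ → ℝ) (δ : ℕ → ℝ) (i : ℕ) (s : ℤ) (n : ℕ) : ℝ :=
  ∑ j ∈ Finset.Icc 1 N, c j * lam j ^ ((i : ℤ) + s) * ∏ l ∈ Finset.range n, (lam j + δ l)

/-- Hankel determinants τ_i^{(s,n)}. -/
noncomputable def tauH (N : ℕ) (lam c : ℕ → ℝ) (δ : ℕ → ℝ) (i : ℕ) (s : ℤ) (n : ℕ) : ℝ :=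
  Matrix.det (Matrix.of fun j k : Fin i => mom N lam c δ (j.1 + k.1) s n)

/-- Reindex a product over a finset by the order isomorphism with `Fin m`. -/
lemma prod_orderIso (J : Finset ℕ) {m : ℕ} (h : J.card = m) (g : ℕ → ℝ) :
    ∏ k ∈ J, g k = ∏ r : Fin m, g (J.orderIsoOfFin h r) := by
  rw [← Finset.prod_attach J g]
  exact (Fintype.prod_equiv (J.orderIsoOfFin h).toEquiv
    (fun r => g (J.orderIsoOfFin h r)) (fun t => g t) (fun r => rfl)).symm

/-- Reindex the product over ordered pairs of a finset by the order isomorphism. -/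
lemma prod_pairs_orderIso (J : Finset ℕ) {m : ℕ} (h : J.card = m) (g : ℕ → ℕ → ℝ) :
    ∏ k ∈ J, ∏ l ∈ J.filter (fun l => k < l), g k l
      = ∏ r : Fin m, ∏ j ∈ Finset.Ioi r,
          g (J.orderIsoOfFin h r) (J.orderIsoOfFin h j) := by
  classical
  rw [prod_orderIso J h]
  refine Fintype.prod_congr _ _ fun r => ?_
  set e := J.orderIsoOfFin h with he
  refine Finset.prod_bij' (i := fun l hl => e.symm ⟨l, (Finset.mem_filter.1 hl).1⟩)
    (j := fun j _ => ((e j : ℕ))) ?_ ?_ ?_ ?_ ?_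
  · intro l hl
    rw [Finset.mem_Ioi]
    have h2 := (Finset.mem_filter.1 hl).2
    have : e r < ⟨l, (Finset.mem_filter.1 hl).1⟩ := Subtype.mk_lt_mk.2 h2
    simpa using (e.lt_iff_lt.1 (by simpa using this))
  · intro j hj
    rw [Finset.mem_filter]
    refine ⟨(e j).2, ?_⟩
    have : e r < e j := e.lt_iff_lt.2 (Finset.mem_Ioi.1 hj)
    exact Subtype.coe_lt_coe.2 this
  · intro l hl
    simp
  · intro j hj
    simp
  · intro l hl
    congr 1
    simp

theorem stmt15 (N : ℕ) (hN : 1 ≤ N) (lam c : ℕ → ℝ) (δ : ℕ → ℝ)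
    (hlam : ∀ j ∈ Finset.Icc 1 N, lam j ≠ 0) :
    ∀ (s : ℤ) (n : ℕ) (i : ℕ), 1 ≤ i → i ≤ N →
      tauH N lam c δ i s n
        = ∑ J ∈ Finset.powersetCard i (Finset.Icc 1 N),
            (∏ k ∈ J, (c k * lam k ^ s * ∏ l ∈ Finset.range n, (lam k + δ l))) *
              ∏ k ∈ J, ∏ l ∈ J.filter (fun l => k < l), (lam k - lam l) ^ 2 := by
  intro s n i hi1 hiN
  classical
  set a : ℕ → ℝ := fun t => c t * lam t ^ s * ∏ l ∈ Finset.range n, (lam t + δ l) with ha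
  set T : (Fin i → ℕ) → ℝ := fun f =>
    (∏ j : Fin i, (a (f j) * lam (f j) ^ (j : ℕ))) *
      Matrix.det (Matrix.of fun j k : Fin i => lam (f j) ^ (k : ℕ)) with hT
  -- Step 1: multilinear expansion of the determinant
  have key : tauH N lam c δ i s n =
      ∑ f ∈ Fintype.piFinset (fun _ : Fin i => Finset.Icc 1 N), T f := by
    have hrow : (Matrix.of fun j k : Fin i => mom N lam c δ (j.1 + k.1) s n)
        = fun j : Fin i => ∑ t ∈ Finset.Icc 1 N,
            (a t * lam t ^ (j : ℕ)) • (fun k : Fin i => lam t ^ (k : ℕ)) := by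
      funext j k
      simp only [Matrix.of_apply, mom, Finset.sum_apply, Pi.smul_apply, smul_eq_mul]
      refine Finset.sum_congr rfl fun t ht => ?_
      have h0 := hlam t ht
      have hp : lam t ^ (((j.1 + k.1 : ℕ) : ℤ) + s)
          = lam t ^ s * (lam t ^ (j : ℕ) * lam t ^ (k : ℕ)) := by
        rw [zpow_add₀ h0, zpow_natCast, pow_add]; ring
      rw [hp, ha]; ring
    unfold tauH
    rw [hrow]
    have hms := (Matrix.detRowAlternating (R := ℝ) (n := Fin i)).toMultilinearMap.map_sum_finset
      (g := fun (j : Fin i) t => (a t * lam t ^ (j : ℕ)) • (fun k : Fin i => lam t ^ (k : ℕ)))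
      (A := fun _ => Finset.Icc 1 N)
    rw [AlternatingMap.coe_multilinearMap] at hms
    show Matrix.detRowAlternating (fun j : Fin i => ∑ t ∈ Finset.Icc 1 N,
        (a t * lam t ^ (j : ℕ)) • (fun k : Fin i => lam t ^ (k : ℕ))) = _
    rw [hms]
    refine Finset.sum_congr rfl fun f _ => ?_
    have hsm := (Matrix.detRowAlternating (R := ℝ) (n := Fin i)).toMultilinearMap.map_smul_univ
      (fun j : Fin i => a (f j) * lam (f j) ^ (j : ℕ)) (fun j k => lam (f j) ^ (k : ℕ))
    rw [AlternatingMap.coe_multilinearMap] at hsm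
    rw [hsm]
    simp only [smul_eq_mul, hT]
    rfl
  -- Step 2: non-injective terms vanish
  have key2 : tauH N lam c δ i s n =
      ∑ f ∈ (Fintype.piFinset (fun _ : Fin i => Finset.Icc 1 N)).filter
          (fun f => Function.Injective f), T f := by
    rw [key, ← Finset.sum_filter_add_sum_filter_not _ (fun f => Function.Injective f)]
    have : ∑ f ∈ (Fintype.piFinset (fun _ : Fin i => Finset.Icc 1 N)).filter
        (fun f => ¬ Function.Injective f), T f = 0 := by
      refine Finset.sum_eq_zero fun f hf => ?_
      have hnf : ¬ Function.Injective f := (Finset.mem_filter.1 hf).2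
      rw [Function.not_injective_iff] at hnf
      obtain ⟨j, k, hjk, hne⟩ := hnf
      have : Matrix.det (Matrix.of fun j k : Fin i => lam (f j) ^ (k : ℕ)) = 0 := by
        apply Matrix.det_zero_of_row_eq hne
        funext l; simp [hjk]
      simp [hT, this]
    rw [this, add_zero]
  -- Step 3: fiberwise over the image
  have key3 : tauH N lam c δ i s n =
      ∑ J ∈ Finset.powersetCard i (Finset.Icc 1 N),
        ∑ f ∈ ((Fintype.piFinset (fun _ : Fin i => Finset.Icc 1 N)).filter
            (fun f => Function.Injective f)).filter
            (fun f => Finset.image f Finset.univ = J), T f := by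
    rw [key2]
    refine (Finset.sum_fiberwise_of_maps_to ?_ _).symm
    intro f hf
    rw [Finset.mem_filter, Fintype.mem_piFinset] at hf
    rw [Finset.mem_powersetCard]
    constructor
    · intro x hx
      obtain ⟨j, _, rfl⟩ := Finset.mem_image.1 hx
      exact hf.1 j
    · rw [Finset.card_image_of_injective _ hf.2]
      simp
  rw [key3]
  refine Finset.sum_congr rfl fun J hJ => ?_
  rw [Finset.mem_powersetCard] at hJ
  obtain ⟨hJs, hJc⟩ := hJ
  set e := J.orderIsoOfFin hJc with he
  set u : Fin i → ℝ := fun r => lam (e r) with hu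
  have hDsum : ∑ σ : Equiv.Perm (Fin i), (Equiv.Perm.sign σ : ℝ) * ∏ j : Fin i, u (σ j) ^ (j : ℕ)
      = Matrix.det (Matrix.vandermonde u) := by
    rw [Matrix.det_apply']
    refine Finset.sum_congr rfl fun σ _ => ?_
    simp [Matrix.vandermonde_apply]
  -- Step 4: sum over the fiber = sum over permutations
  have key4 : ∑ f ∈ ((Fintype.piFinset (fun _ : Fin i => Finset.Icc 1 N)).filter
          (fun f => Function.Injective f)).filter
          (fun f => Finset.image f Finset.univ = J), T f
      = ∑ σ : Equiv.Perm (Fin i), T (fun j => ((e (σ j) : ℕ))) := by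
    refine (Finset.sum_bij (i := fun (σ : Equiv.Perm (Fin i)) _ => fun j => ((e (σ j) : ℕ)))
      ?_ ?_ ?_ ?_).symm
    · intro σ _
      have hinj : Function.Injective (fun j => ((e (σ j) : ℕ))) := by
        intro j k hjk
        exact σ.injective (e.injective (Subtype.ext hjk))
      rw [Finset.mem_filter]
      constructor
      · rw [Finset.mem_filter]
        refine ⟨?_, hinj⟩
        rw [Fintype.mem_piFinset]
        intro j
        exact hJs (e (σ j)).2
      · apply Finset.eq_of_subset_of_card_le
        · intro x hx
          obtain ⟨j, _, rfl⟩ := Finset.mem_image.1 hx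
          exact (e (σ j)).2
        · rw [Finset.card_image_of_injective _ hinj, Finset.card_univ, Fintype.card_fin, hJc]
    · intro σ1 _ σ2 _ hfe
      ext j
      have h1 := congrFun hfe j
      have : σ1 j = σ2 j := e.injective (Subtype.ext h1)
      exact congrArg Fin.val this
    · intro f hf
      have hf1 := Finset.mem_filter.1 hf
      have hinj : Function.Injective f := (Finset.mem_filter.1 hf1.1).2
      have hmemJ : ∀ r, f r ∈ J := fun r => by
        rw [← hf1.2]; exact Finset.mem_image_of_mem f (Finset.mem_univ r)
      have hbij : Function.Bijective (fun r => e.symm ⟨f r, hmemJ r⟩) := by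
        rw [Fintype.bijective_iff_injective_and_card]
        refine ⟨?_, rfl⟩
        intro r1 r2 h12
        apply hinj
        exact congrArg Subtype.val (e.symm.injective h12)
      refine ⟨Equiv.ofBijective _ hbij, Finset.mem_univ _, ?_⟩
      funext r
      show ((e (Equiv.ofBijective _ hbij r) : ℕ)) = f r
      simp [Equiv.ofBijective_apply, OrderIso.apply_symm_apply]
    · intro σ _
      rfl
  rw [key4]
  -- Step 5: compute each permutation term
  have key5 : ∀ σ : Equiv.Perm (Fin i), T (fun j => ((e (σ j) : ℕ)))
      = (∏ k ∈ J, a k) * Matrix.det (Matrix.vandermonde u) *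
          ((Equiv.Perm.sign σ : ℝ) * ∏ j : Fin i, u (σ j) ^ (j : ℕ)) := by
    intro σ
    have hdet : Matrix.det (Matrix.of fun j k : Fin i => lam ((e (σ j) : ℕ)) ^ (k : ℕ))
        = (Equiv.Perm.sign σ : ℝ) * Matrix.det (Matrix.vandermonde u) := by
      have h := Matrix.det_permute σ (Matrix.vandermonde u)
      rw [show (Matrix.of fun j k : Fin i => lam ((e (σ j) : ℕ)) ^ (k : ℕ))
        = fun r => Matrix.vandermonde u (σ r) from rfl]
      exact_mod_cast h
    have hprod : (∏ j : Fin i, a ((e (σ j) : ℕ)) * lam ((e (σ j) : ℕ)) ^ (j : ℕ))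
        = (∏ k ∈ J, a k) * ∏ j : Fin i, u (σ j) ^ (j : ℕ) := by
      rw [Finset.prod_mul_distrib]
      congr 1
      rw [prod_orderIso J hJc a]
      exact Equiv.prod_comp σ (fun j => a ((e j : ℕ)))
    rw [hT]
    dsimp only
    rw [hprod, hdet]
    ring
  calc ∑ σ : Equiv.Perm (Fin i), T (fun j => ((e (σ j) : ℕ)))
      = (∏ k ∈ J, a k) * Matrix.det (Matrix.vandermonde u) *
          ∑ σ : Equiv.Perm (Fin i), (Equiv.Perm.sign σ : ℝ) * ∏ j : Fin i, u (σ j) ^ (j : ℕ) := by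
        rw [Finset.mul_sum]; exact Finset.sum_congr rfl fun σ _ => key5 σ
    _ = (∏ k ∈ J, a k) * (Matrix.det (Matrix.vandermonde u) * Matrix.det (Matrix.vandermonde u)) := by
        rw [hDsum]; ring
    _ = (∏ k ∈ J, a k) * ∏ k ∈ J, ∏ l ∈ J.filter (fun l => k < l), (lam k - lam l) ^ 2 := by
        congr 1
        rw [Matrix.det_vandermonde, prod_pairs_orderIso J hJc (fun k l => (lam k - lam l) ^ 2)]
        rw [← Finset.prod_mul_distrib]
        refine Fintype.prod_congr _ _ fun r => ?_
        rw [← Finset.prod_mul_distrib]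
        refine Finset.prod_congr rfl fun j _ => ?_
        show (u j - u r) * (u j - u r) = (u r - u j) ^ 2
        ring
end

section
/- Let N ≥ 1, let λ_1,…,λ_N be pairwise distinct positive reals, c_1,…,c_N positive reals, and (δ^{(n)})_{n≥0} a sequence of nonzero reals with δ^{(n)} > −min_j λ_j for all n. Define moments μ_i^{(s,n)} := Σ_{j=1}^N c_j λ_j^{i+s} Π_{ℓ=0}^{n−1} (λ_j + δ^{(ℓ)}), Hankel determinants τ_0^{(s,n)} := 1, τ_i^{(s,n)} := det(μ_{j+k}^{(s,n)})_{j,k=0}^{i−1}, and Q_i^{(n)} := τ_{i−1}^{(−n,n)} τ_i^{(−n+1,n)}/(τ_i^{(−n,n)} τ_{i−1}^{(−n+1,n)}), Q̄_i^{(n)} := τ_{i−1}^{(−n,n)} τ_i^{(−n,n+1)}/(τ_i^{(−n,n)} τ_{i−1}^{(−n,n+1)}), E_i^{(n)} := τ_{i+1}^{(−n,n)} τ_{i−1}^{(−n+1,n)}/(τ_i^{(−n,n)} τ_i^{(−n+1,n)}). Define p_i^{(n)} := (Q̄_i^{(n)}/Q_i^{(n)} − 1)/δ^{(n)} and x_i^{(n)}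 := log( τ_i^{(−n,n)} τ_{i−1}^{(−n,n+1)} / (τ_{i−1}^{(−n+1,n)} τ_{i−1}^{(−n+1,n+1)}) ). Then for every n ∈ ℕ: (a) p_i^{(n)} = τ_i^{(−n,n)} τ_{i−1}^{(−n+1,n+1)} / (τ_{i−1}^{(−n,n+1)} τ_i^{(−n+1,n)}) for i = 1,…,N; (b) e^{x_{i+1}^{(n)} − x_i^{(n)}} = p_i^{(n)} E_i^{(n)} / (p_{i+1}^{(n)} Q_{i+1}^{(n)}) for i = 1,…,N−1. -/
open Finset

/-- Q_i^{(n)} := τ_{i−1}^{(−n,n)} τ_i^{(−n+1,n)}/(τ_i^{(−n,n)} τ_{i−1}^{(−n+1,n)}). -/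
noncomputable def Qn (N : ℕ) (lam c : ℕ → ℝ) (δ : ℕ → ℝ) (i n : ℕ) : ℝ :=
  tauH N lam c δ (i - 1) (-(n : ℤ)) n * tauH N lam c δ i (-(n : ℤ) + 1) n /
    (tauH N lam c δ i (-(n : ℤ)) n * tauH N lam c δ (i - 1) (-(n : ℤ) + 1) n)

/-- Q̄_i^{(n)} := τ_{i−1}^{(−n,n)} τ_i^{(−n,n+1)}/(τ_i^{(−n,n)} τ_{i−1}^{(−n,n+1)}). -/
noncomputable def Qbn (N : ℕ) (lam c : ℕ → ℝ) (δ : ℕ → ℝ) (i n : ℕ) : ℝ :=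
  tauH N lam c δ (i - 1) (-(n : ℤ)) n * tauH N lam c δ i (-(n : ℤ)) (n + 1) /
    (tauH N lam c δ i (-(n : ℤ)) n * tauH N lam c δ (i - 1) (-(n : ℤ)) (n + 1))

/-- E_i^{(n)} := τ_{i+1}^{(−n,n)} τ_{i−1}^{(−n+1,n)}/(τ_i^{(−n,n)} τ_i^{(−n+1,n)}). -/
noncomputable def En (N : ℕ) (lam c : ℕ → ℝ) (δ : ℕ → ℝ) (i n : ℕ) : ℝ :=
  tauH N lam c δ (i + 1) (-(n : ℤ)) n * tauH N lam c δ (i - 1) (-(n : ℤ) + 1) n /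
    (tauH N lam c δ i (-(n : ℤ)) n * tauH N lam c δ i (-(n : ℤ) + 1) n)

/-- p_i^{(n)} := (Q̄_i^{(n)}/Q_i^{(n)} − 1)/δ^{(n)}. -/
noncomputable def pn (N : ℕ) (lam c : ℕ → ℝ) (δ : ℕ → ℝ) (i n : ℕ) : ℝ :=
  (Qbn N lam c δ i n / Qn N lam c δ i n - 1) / δ n

/-- x_i^{(n)} := log( τ_i^{(−n,n)} τ_{i−1}^{(−n,n+1)} / (τ_{i−1}^{(−n+1,n)} τ_{i−1}^{(−n+1,n+1)}) ). -/
noncomputable def xn (N : ℕ) (lam c : ℕ → ℝ) (δ : ℕ → ℝ) (i n : ℕ) : ℝ :=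
  Real.log (tauH N lam c δ i (-(n : ℤ)) n * tauH N lam c δ (i - 1) (-(n : ℤ)) (n + 1) /
    (tauH N lam c δ (i - 1) (-(n : ℤ) + 1) n * tauH N lam c δ (i - 1) (-(n : ℤ) + 1) (n + 1)))

/-!
Passing from `n` to `n + 1` multiplies the weights `c_j` by `λ_j + δ⁽ⁿ⁾`, so the moments obey
`μ_m^(s,n+1) = μ_{m+1}^(s,n) + δ⁽ⁿ⁾ μ_m^(s,n)`, while `s ↦ s + 1` shifts `m`. For any sequence `μ`
and `ν_m = μ_{m+1} + d μ_m` the Hankel determinants satisfy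
`H_{p+1}(ν) H_p(Sμ) - H_p(ν) H_{p+1}(Sμ) = d H_{p+1}(μ) H_p(Sν)` (`S` the shift): this is a
three-term Plücker relation for the matrix with columns `Sμ, ν, Sν, …, Sᵖν`, whose maximal minors
become Hankel determinants after triangular column operations. The Hankel moment matrices are
`Vᵀ D V` with `D` positive diagonal and `V` a Vandermonde matrix of full column rank, so every `τ`
is positive; (a) and (b) are then rational identities in the `τ`.
-/

open Matrix

namespace Matrix

variable {R : Type*} [CommRing R]

theorem det_of_cases_succ_add_mul_castSucc {q : ℕ} (H : Matrix (Fin (q + 1)) (Fin (q + 1)) R)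
    (d : R) :
    (of fun r c => Fin.cases (H r 0) (fun c' => H r c'.succ + d * H r c'.castSucc) c).det =
      H.det := by
  let S : Matrix (Fin (q + 1)) (Fin (q + 1)) R := of fun a c => if (a : ℕ) + 1 = c then 1 else 0
  have hU : (1 + d • S).det = 1 := by
    rw [det_of_isUpperTriangular]
    · simp [S]
    · intro a c (hca : c < a)
      simp [S, hca.ne', show (a : ℕ) + 1 ≠ c by omega]
  have hHS : ∀ r c, (H * S) r c = Fin.cases 0 (fun c' => H r c'.castSucc) c := by
    intro r c
    cases c using Fin.cases with
    | zero => simp [mul_apply, S]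
    | succ c =>
      rw [mul_apply, Finset.sum_eq_single c.castSucc] <;> simp +contextual [S, Fin.ext_iff]
  have hHU : H * (1 + d • S) =
      of fun r c => Fin.cases (H r 0) (fun c' => H r c'.succ + d * H r c'.castSucc) c := by
    ext r c
    rw [mul_add, mul_one, Matrix.mul_smul, add_apply, smul_apply, hHS]
    cases c using Fin.cases <;> simp
  rw [← hHU, det_mul, hU, mul_one]

theorem det_of_cases_one_add_mul_castSucc {q : ℕ} (H : Matrix (Fin (q + 2)) (Fin (q + 2)) R)
    (d : R) :
    (of fun r c => Fin.cases (H r 1) (fun c' => H r c'.succ + d * H r c'.castSucc) c).det =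
      -d * H.det := by
  set M : Matrix (Fin (q + 2)) (Fin (q + 2)) R :=
    of fun r c => Fin.cases (H r 0) (fun c' => H r c'.succ + d * H r c'.castSucc) c
  have hM : (of fun r c => Fin.cases (H r 1) (fun c' => H r c'.succ + d * H r c'.castSucc) c) =
      M.updateCol 0 ((fun r => M r 1) + (-d) • fun r => M r 0) := by
    ext r c
    cases c using Fin.cases with
    | zero =>
      simp only [M, of_apply, updateCol_self, Pi.add_apply, Pi.smul_apply, smul_eq_mul,
        Fin.cases_zero]
      rw [← Fin.succ_zero_eq_one, Fin.cases_succ, Fin.castSucc_zero]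
      ring
    | succ c => simp [M, Fin.succ_ne_zero]
  rw [hM, det_updateCol_add, det_updateCol_smul, updateCol_eq_self,
    det_updateCol_eq_zero one_ne_zero, det_of_cases_succ_add_mul_castSucc]
  ring

theorem det_of_cases_last_castSucc {q : ℕ} (B : Matrix (Fin (q + 1)) (Fin (q + 1)) R) :
    (of fun r c => Fin.cases (B r (Fin.last q)) (fun c' => B r c'.castSucc) c).det =
      (-1) ^ q * B.det := by
  have hB : (of fun r c => Fin.cases (B r (Fin.last q)) (fun c' => B r c'.castSucc) c) =
      B.submatrix id (finRotate (q + 1)).symm := by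
    ext r c
    cases c using Fin.cases <;> simp <;> congr 1 <;> ext <;> simp [Fin.coe_sub_one]
  rw [hB, det_permute', Equiv.Perm.sign_symm, sign_finRotate]
  simp

theorem mulVec_alternating_minors_eq_zero {p : ℕ} (A : Matrix (Fin p) (Fin (p + 1)) R) :
    A *ᵥ (fun k => (-1) ^ (k : ℕ) * (A.submatrix id k.succAbove).det) = 0 := by
  ext j
  let M : Matrix (Fin (p + 1)) (Fin (p + 1)) R :=
    of fun i k => Fin.cases (A j k) (fun i' => A i' k) i
  have hdup : M.det = 0 := det_zero_of_row_eq (Fin.succ_ne_zero j).symm (by ext k; simp [M])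
  rw [det_succ_row_zero] at hdup
  rw [mulVec, dotProduct, Pi.zero_apply, ← hdup]
  refine Finset.sum_congr rfl fun k _ => ?_
  rw [show M.submatrix Fin.succ k.succAbove = A.submatrix id k.succAbove by ext; simp [M]]
  simp only [M, of_apply, Fin.cases_zero]
  ring

/-- A Plücker relation: the alternating maximal minors of `A` form a kernel vector of `A`, and
`v ↦ (B.updateCol c v).det` is linear. -/
theorem sum_alternating_minors_mul_det_updateCol_eq_zero {p q : ℕ}
    (A : Matrix (Fin p) (Fin (p + 1)) R) (B : Matrix (Fin q) (Fin q) R) (c : Fin q)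
    (e : Fin q → Fin p) :
    ∑ k : Fin (p + 1), (-1) ^ (k : ℕ) * (A.submatrix id k.succAbove).det *
      (B.updateCol c fun r => A (e r) k).det = 0 := by
  set w : Fin (p + 1) → R := fun k => (-1) ^ (k : ℕ) * (A.submatrix id k.succAbove).det
  have hker : ∑ k, w k • (fun r => A (e r) k) = 0 := by
    ext r
    simpa [mulVec, dotProduct, mul_comm] using congrFun A.mulVec_alternating_minors_eq_zero (e r)
  calc ∑ k, w k * (B.updateCol c fun r => A (e r) k).det
      = cramer B (∑ k, w k • fun r => A (e r) k) c := by
        rw [map_sum, Finset.sum_apply]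
        simp only [cramer_apply, det_updateCol_smul]
    _ = 0 := by rw [hker, map_zero, Pi.zero_apply]

end Matrix

section Hankel

variable {R : Type*} [CommRing R]

def hankel (f : ℕ → R) (p : ℕ) : Matrix (Fin p) (Fin p) R := of fun j k => f (j + k)

theorem det_hankel_updateCol_zero_shift {μ ν : ℕ → R} {d : R}
    (hν : ∀ m, ν m = μ (m + 1) + d * μ m) (q : ℕ) :
    ((hankel ν (q + 1)).updateCol 0 fun r => μ (r + 1)).det =
      (hankel (fun m => μ (m + 1)) (q + 1)).det := by
  rw [← det_of_cases_succ_add_mul_castSucc (hankel (fun m => μ (m + 1)) (q + 1)) d]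
  congr 1
  ext r c
  cases c using Fin.cases <;> simp [hankel, hν, add_assoc]

theorem det_hankel_updateCol_zero_last (f : ℕ → R) (q : ℕ) :
    ((hankel f (q + 1)).updateCol 0 fun r => f (r + (q + 1))).det =
      (-1) ^ q * (hankel (fun m => f (m + 1)) (q + 1)).det := by
  rw [← det_of_cases_last_castSucc]
  congr 1
  ext r c
  cases c using Fin.cases <;> simp [hankel, add_assoc]

def borderedHankel (μ ν : ℕ → R) (q : ℕ) : Matrix (Fin (q + 2)) (Fin (q + 3)) R :=
  of fun j k => Fin.cases (μ (j + 1)) (fun k' => ν (j + k')) k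

theorem det_borderedHankel_submatrix_one {μ ν : ℕ → R} {d : R}
    (hν : ∀ m, ν m = μ (m + 1) + d * μ m) (q : ℕ) :
    ((borderedHankel μ ν q).submatrix id (Fin.succAbove 1)).det =
      (hankel (fun m => μ (m + 1)) (q + 2)).det := by
  rw [← det_of_cases_succ_add_mul_castSucc (hankel (fun m => μ (m + 1)) (q + 2)) d]
  congr 1
  ext r c
  cases c using Fin.cases <;> simp [borderedHankel, hankel, hν, add_assoc]

theorem det_borderedHankel_submatrix_last {μ ν : ℕ → R} {d : R}
    (hν : ∀ m, ν m = μ (m + 1) + d * μ m) (q : ℕ) :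
    ((borderedHankel μ ν q).submatrix id (Fin.last (q + 2)).succAbove).det =
      -d * (hankel μ (q + 2)).det := by
  rw [← det_of_cases_one_add_mul_castSucc (hankel μ (q + 2)) d]
  congr 1
  ext r c
  cases c using Fin.cases <;> simp [borderedHankel, hankel, hν, add_assoc]

theorem det_hankel_christoffel {μ ν : ℕ → R} {d : R} (hν : ∀ m, ν m = μ (m + 1) + d * μ m)
    (p : ℕ) :
    (hankel ν (p + 1)).det * (hankel (fun m => μ (m + 1)) p).det
      - (hankel ν p).det * (hankel (fun m => μ (m + 1)) (p + 1)).det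
      = d * (hankel μ (p + 1)).det * (hankel (fun m => ν (m + 1)) p).det := by
  rcases p with _ | q
  · simp [hankel, hν]
  set B := hankel ν (q + 1)
  have hX0 : ((borderedHankel μ ν q).submatrix id (Fin.succAbove 0)).det =
      (hankel ν (q + 2)).det := rfl
  have hG0 : (B.updateCol 0 fun r => borderedHankel μ ν q r.castSucc 0).det =
      (hankel (fun m => μ (m + 1)) (q + 1)).det := det_hankel_updateCol_zero_shift hν q
  have hG1 : (B.updateCol 0 fun r => borderedHankel μ ν q r.castSucc 1).det = B.det := by
    have hcol : (fun r => borderedHankel μ ν q r.castSucc 1) = fun r => B r 0 := by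
      ext r
      simp only [B, borderedHankel, hankel, of_apply]
      rw [← Fin.succ_zero_eq_one, Fin.cases_succ]
      simp
    rw [hcol, updateCol_eq_self]
  have hGlast : (B.updateCol 0 fun r => borderedHankel μ ν q r.castSucc (Fin.last (q + 2))).det =
      (-1) ^ q * (hankel (fun m => ν (m + 1)) (q + 1)).det := det_hankel_updateCol_zero_last ν q
  -- Columns `2, …, q + 1` of `borderedHankel μ ν q` are columns of `B`, so only three terms of
  -- the relation survive.
  have hmid : ∀ k : Fin q,
      (B.updateCol 0 fun r => borderedHankel μ ν q r.castSucc k.castSucc.succ.succ).det = 0 := by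
    intro k
    convert det_updateCol_eq_zero (M := B) (Fin.succ_ne_zero k) using 3
    ext r
    simp [B, borderedHankel, hankel]
  have hrel :=
    sum_alternating_minors_mul_det_updateCol_eq_zero (borderedHankel μ ν q) B 0 Fin.castSucc
  rw [Fin.sum_univ_succ, Fin.sum_univ_succ, Fin.sum_univ_castSucc] at hrel
  simp only [hmid, mul_zero, Finset.sum_const_zero, zero_add, Fin.succ_zero_eq_one,
    Fin.succ_last, hX0, hG0, hG1, hGlast, det_borderedHankel_submatrix_one hν,
    det_borderedHankel_submatrix_last hν, Fin.val_zero, Fin.val_one, Fin.val_last,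
    Nat.succ_eq_add_one] at hrel
  have hsign : (-1 : R) ^ (q + 2) * (-1) ^ q = 1 := by
    rw [← pow_add]
    exact Even.neg_one_pow ⟨q + 1, by ring⟩
  linear_combination hrel +
    d * (hankel μ (q + 2)).det * (hankel (fun m => ν (m + 1)) (q + 1)).det * hsign

theorem det_hankel_moments_pos {ι : Type*} [Fintype ι] (w x : ι → ℝ) (hw : ∀ r, 0 < w r)
    (hx : Function.Injective x) {p : ℕ} (hp : p ≤ Fintype.card ι) :
    0 < (hankel (fun m => ∑ r, w r * x r ^ m) p).det := by
  classical
  let V : Matrix ι (Fin p) ℝ := of fun r j => x r ^ (j : ℕ)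
  have hfactor : hankel (fun m => ∑ r, w r * x r ^ m) p = Vᴴ * diagonal w * V := by
    ext j k
    simp only [V, hankel, mul_apply, of_apply, conjTranspose_apply, star_trivial, diagonal_apply,
      mul_ite, mul_zero, Finset.sum_ite_eq', Finset.mem_univ, if_true, pow_add]
    exact Finset.sum_congr rfl fun r _ => by ring
  have hV : Function.Injective V.mulVec := by
    obtain ⟨e⟩ := Function.Embedding.nonempty_of_card_le (α := Fin p) (β := ι) (by simpa using hp)
    intro u v huv
    rw [← sub_eq_zero]
    refine eq_zero_of_forall_index_sum_pow_mul_eq_zero (hx.comp e.injective) fun j => ?_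
    simpa [V, mulVec, dotProduct, mul_sub, sub_eq_zero] using congrFun huv (e j)
  rw [hfactor]
  exact ((PosDef.diagonal hw).conjTranspose_mul_mul_same hV).det_pos

end Hankel

section Moments

variable {N : ℕ} {lam c δ : ℕ → ℝ}

theorem tauH_eq_det_hankel (i : ℕ) (s : ℤ) (n : ℕ) :
    tauH N lam c δ i s n = (hankel (fun m => mom N lam c δ m s n) i).det := rfl

theorem mom_shift_add_one (m : ℕ) (s : ℤ) (n : ℕ) :
    mom N lam c δ m (s + 1) n = mom N lam c δ (m + 1) s n := by
  simp only [mom]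
  push_cast
  ring_nf

theorem mom_christoffel (hlam : ∀ j ∈ Finset.Icc 1 N, lam j ≠ 0) (m : ℕ) (s : ℤ) (n : ℕ) :
    mom N lam c δ m s (n + 1) = mom N lam c δ (m + 1) s n + δ n * mom N lam c δ m s n := by
  simp only [mom, Finset.mul_sum, ← Finset.sum_add_distrib]
  refine Finset.sum_congr rfl fun j hj => ?_
  rw [Finset.prod_range_succ, Nat.cast_succ, add_right_comm, zpow_add_one₀ (hlam j hj)]
  ring

theorem tauH_christoffel (hlam : ∀ j ∈ Finset.Icc 1 N, lam j ≠ 0) (k : ℕ) (s : ℤ) (n : ℕ) :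
    tauH N lam c δ (k + 1) s (n + 1) * tauH N lam c δ k (s + 1) n
      - tauH N lam c δ k s (n + 1) * tauH N lam c δ (k + 1) (s + 1) n
      = δ n * tauH N lam c δ (k + 1) s n * tauH N lam c δ k (s + 1) (n + 1) := by
  have hshift : ∀ n, (fun m => mom N lam c δ m (s + 1) n) = fun m => mom N lam c δ (m + 1) s n :=
    fun n => funext fun m => mom_shift_add_one m s n
  simp only [tauH_eq_det_hankel, hshift]
  exact det_hankel_christoffel (μ := fun m => mom N lam c δ m s n) (mom_christoffel hlam · s n) k

theorem tauH_pos (hlam : ∀ j ∈ Finset.Icc 1 N, 0 < lam j)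
    (hdist : ∀ j ∈ Finset.Icc 1 N, ∀ k ∈ Finset.Icc 1 N, j ≠ k → lam j ≠ lam k)
    (hc : ∀ j ∈ Finset.Icc 1 N, 0 < c j) (hδ : ∀ l, ∀ j ∈ Finset.Icc 1 N, -lam j < δ l)
    {i : ℕ} (hi : i ≤ N) (s : ℤ) (n : ℕ) :
    0 < tauH N lam c δ i s n := by
  let w : Finset.Icc 1 N → ℝ := fun j => c j * lam j ^ s * ∏ l ∈ Finset.range n, (lam j + δ l)
  have hmom : (fun m => mom N lam c δ m s n) = fun m => ∑ j, w j * lam j ^ m := by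
    ext m
    rw [mom, ← Finset.sum_coe_sort]
    refine Finset.sum_congr rfl fun j _ => ?_
    rw [add_comm, zpow_add₀ (hlam j j.2).ne', zpow_natCast]
    ring
  rw [tauH_eq_det_hankel, hmom]
  refine det_hankel_moments_pos w (fun j => lam j) (fun j => ?_) ?_ (by simpa using hi)
  · exact mul_pos (mul_pos (hc j j.2) (zpow_pos (hlam j j.2) s))
      (Finset.prod_pos fun l _ => neg_lt_iff_pos_add'.mp (hδ l j j.2))
  · intro j k hjk
    by_contra hne
    exact hdist j j.2 k k.2 (Subtype.coe_ne_coe.mpr hne) hjk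

theorem pn_eq_tauH (hlam : ∀ j ∈ Finset.Icc 1 N, lam j ≠ 0)
    (hτ : ∀ i ≤ N, ∀ s n, tauH N lam c δ i s n ≠ 0) {n : ℕ} (hδ : δ n ≠ 0) {i : ℕ} (hi : 1 ≤ i)
    (hiN : i ≤ N) :
    pn N lam c δ i n
      = tauH N lam c δ i (-(n : ℤ)) n * tauH N lam c δ (i - 1) (-(n : ℤ) + 1) (n + 1) /
        (tauH N lam c δ (i - 1) (-(n : ℤ)) (n + 1) * tauH N lam c δ i (-(n : ℤ) + 1) n) := by
  obtain ⟨k, rfl⟩ : ∃ k, i = k + 1 := ⟨i - 1, by omega⟩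
  have := hτ k (by omega) (-n) n
  have := hτ (k + 1) hiN (-n) n
  have := hτ k (by omega) (-n + 1) n
  have := hτ (k + 1) hiN (-n + 1) n
  have := hτ k (by omega) (-n) (n + 1)
  rw [pn, Qn, Qbn, Nat.add_sub_cancel]
  field_simp
  linear_combination tauH_christoffel (c := c) (δ := δ) hlam k (-n) n

theorem exp_xn_succ_sub_xn (hlam : ∀ j ∈ Finset.Icc 1 N, lam j ≠ 0)
    (hτ : ∀ i ≤ N, ∀ s n, 0 < tauH N lam c δ i s n) {n : ℕ} (hδ : δ n ≠ 0) {i : ℕ} (hi : 1 ≤ i)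
    (hiN : i + 1 ≤ N) :
    Real.exp (xn N lam c δ (i + 1) n - xn N lam c δ i n)
      = pn N lam c δ i n * En N lam c δ i n /
        (pn N lam c δ (i + 1) n * Qn N lam c δ (i + 1) n) := by
  have hτ' := fun i hi s n => (hτ i hi s n).ne'
  obtain ⟨k, rfl⟩ : ∃ k, i = k + 1 := ⟨i - 1, by omega⟩
  rw [pn_eq_tauH hlam hτ' hδ hi (by omega), pn_eq_tauH hlam hτ' hδ (by omega) hiN, xn, xn, En,
    Qn]
  simp only [Nat.add_sub_cancel]
  have := hτ k (by omega) (-n) n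
  have := hτ (k + 1) (by omega) (-n) n
  have := hτ (k + 2) hiN (-n) n
  have := hτ k (by omega) (-n + 1) n
  have := hτ (k + 1) (by omega) (-n + 1) n
  have := hτ (k + 2) hiN (-n + 1) n
  have := hτ k (by omega) (-n) (n + 1)
  have := hτ (k + 1) (by omega) (-n) (n + 1)
  have := hτ k (by omega) (-n + 1) (n + 1)
  have := hτ (k + 1) (by omega) (-n + 1) (n + 1)
  rw [Real.exp_sub, Real.exp_log (by positivity), Real.exp_log (by positivity)]
  field_simp

end Moments

theorem stmt17_general (N : ℕ) (lam c : ℕ → ℝ) (δ : ℕ → ℝ)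
    (hlampos : ∀ j ∈ Finset.Icc 1 N, 0 < lam j)
    (hdist : ∀ j ∈ Finset.Icc 1 N, ∀ k ∈ Finset.Icc 1 N, j ≠ k → lam j ≠ lam k)
    (hcpos : ∀ j ∈ Finset.Icc 1 N, 0 < c j)
    (hδne : ∀ n : ℕ, δ n ≠ 0)
    (hδmin : ∀ n : ℕ, ∀ j ∈ Finset.Icc 1 N, -lam j < δ n) :
    (∀ (n : ℕ) (i : ℕ), 1 ≤ i → i ≤ N →
      pn N lam c δ i n
        = tauH N lam c δ i (-(n : ℤ)) n * tauH N lam c δ (i - 1) (-(n : ℤ) + 1) (n + 1) /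
          (tauH N lam c δ (i - 1) (-(n : ℤ)) (n + 1) * tauH N lam c δ i (-(n : ℤ) + 1) n)) ∧
    (∀ (n : ℕ) (i : ℕ), 1 ≤ i → i ≤ N - 1 →
      Real.exp (xn N lam c δ (i + 1) n - xn N lam c δ i n)
        = pn N lam c δ i n * En N lam c δ i n /
          (pn N lam c δ (i + 1) n * Qn N lam c δ (i + 1) n)) := by
  have hlam : ∀ j ∈ Finset.Icc 1 N, lam j ≠ 0 := fun j hj => (hlampos j hj).ne'
  have hτ : ∀ i ≤ N, ∀ s n, 0 < tauH N lam c δ i s n :=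
    fun i hi s n => tauH_pos hlampos hdist hcpos hδmin hi s n
  exact ⟨fun n i hi hiN => pn_eq_tauH hlam (fun i hi s n => (hτ i hi s n).ne') (hδne n) hi hiN,
    fun n i hi hiN => exp_xn_succ_sub_xn hlam hτ (hδne n) hi (by omega)⟩

theorem stmt17 (N : ℕ) (hN : 1 ≤ N) (lam c : ℕ → ℝ) (δ : ℕ → ℝ)
    (hlampos : ∀ j ∈ Finset.Icc 1 N, 0 < lam j)
    (hdist : ∀ j ∈ Finset.Icc 1 N, ∀ k ∈ Finset.Icc 1 N, j ≠ k → lam j ≠ lam k)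
    (hcpos : ∀ j ∈ Finset.Icc 1 N, 0 < c j)
    (hδne : ∀ n : ℕ, δ n ≠ 0)
    (hδmin : ∀ n : ℕ, ∀ j ∈ Finset.Icc 1 N, -lam j < δ n) :
    (∀ (n : ℕ) (i : ℕ), 1 ≤ i → i ≤ N →
      pn N lam c δ i n
        = tauH N lam c δ i (-(n : ℤ)) n * tauH N lam c δ (i - 1) (-(n : ℤ) + 1) (n + 1) /
          (tauH N lam c δ (i - 1) (-(n : ℤ)) (n + 1) * tauH N lam c δ i (-(n : ℤ) + 1) n)) ∧
    (∀ (n : ℕ) (i : ℕ), 1 ≤ i → i ≤ N - 1 →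
      Real.exp (xn N lam c δ (i + 1) n - xn N lam c δ i n)
        = pn N lam c δ i n * En N lam c δ i n /
          (pn N lam c δ (i + 1) n * Qn N lam c δ (i + 1) n)) :=
  stmt17_general N lam c δ hlampos hdist hcpos hδne hδmin
end

section
/- Let N ≥ 1, let λ_1,…,λ_N be pairwise distinct positive reals, c_1,…,c_N positive reals, and (δ^{(ℓ)})_{ℓ≥0} a real sequence with λ_j + δ^{(ℓ)} > 0 for all j and ℓ, converging to a limit δ* satisfying 1 + δ*/λ_1 > 1 + δ*/λ_2 > ⋯ > 1 + δ*/λ_N > 0. Define moments μ_i^{(s,n)} := Σ_{j=1}^N c_j λ_j^{i+s} Π_{ℓ=0}^{n−1} (λ_j + δ^{(ℓ)}) and Hankel determinants τ_0^{(s,n)} := 1, τ_i^{(s,n)} := det(μ_{j+k}^{(s,n)})_{j,k=0}^{i−1}. Then for every fixed s̄ ∈ ℤ and every i = 0,1,…,N−1, the ratio τ_i^{(−n+s̄,n)} / { Π_{k=1}^{i} [ c_k λ_k^{s̄} Π_{ℓ=0}^{n−1} (1 + δ^{(ℓ)}/λ_k) ] · Π_{1 ≤ k < ℓ ≤ i}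 (λ_k − λ_ℓ)² } tends to 1 as n → ∞. -/
/-!
Put w_m(n) = c_m λ_m^{s̄} Π_{ℓ<n} (1 + δ^{(ℓ)}/λ_m). Then μ_{j+k}^{(−n+s̄,n)} equals
Σ_m w_m(n) λ_m^j λ_m^k, and expanding the Hankel determinant row by row gives
Σ_f Π_j w_{f(j)}(n) λ_{f(j)}^j · V(λ ∘ f) over maps f : {0,…,i−1} → {1,…,N}, with V the
Vandermonde determinant, so only injective f contribute. As 1 + δ*/λ_m strictly decreases in m,
w_a(n)/w_b(n) → 0 for a > b; after division by Π_{k≤i} w_k(n) only the f with image {1,…,i}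
survive, and their terms add up to the Gram determinant det(VᵀV) = Π_{k<l≤i} (λ_k − λ_l)².
-/

open Finset Filter

open Topology Matrix

theorem tendsto_prod_range_zero_of_tendsto_lt_one {q : ℕ → ℝ} {ρ : ℝ} (hq : ∀ l, 0 ≤ q l)
    (hρ : ρ < 1) (hlim : Tendsto q atTop (𝓝 ρ)) :
    Tendsto (fun n => ∏ l ∈ range n, q l) atTop (𝓝 0) := by
  obtain ⟨r, hρr, hr1⟩ := exists_between hρ
  refine (summable_of_ratio_norm_eventually_le hr1 ?_).tendsto_atTop_zero
  filter_upwards [hlim.eventually (gt_mem_nhds hρr)] with n hn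
  rw [prod_range_succ, norm_mul, Real.norm_of_nonneg (hq n), mul_comm]
  exact mul_le_mul_of_nonneg_right hn.le (norm_nonneg _)

theorem tendsto_prod_range_div_zero {u v : ℕ → ℝ} {α β : ℝ} (hu : ∀ l, 0 < u l)
    (hv : ∀ l, 0 < v l) (hul : Tendsto u atTop (𝓝 α)) (hvl : Tendsto v atTop (𝓝 β))
    (hαβ : α < β) :
    Tendsto (fun n => (∏ l ∈ range n, u l) / ∏ l ∈ range n, v l) atTop (𝓝 0) := by
  have hβ : 0 < β := (ge_of_tendsto' hul fun l => (hu l).le).trans_lt hαβ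
  simp only [← prod_div_distrib]
  exact tendsto_prod_range_zero_of_tendsto_lt_one (fun l => (div_pos (hu l) (hv l)).le)
    ((div_lt_one hβ).mpr hαβ) (hul.div hvl hβ.ne')

theorem det_hankel_eq_sum_piFinset {ι R : Type*} [CommRing R] [DecidableEq ι] (T : Finset ι)
    (w x : ι → R) (i : ℕ) :
    det (of fun j k : Fin i => ∑ m ∈ T, w m * x m ^ (j : ℕ) * x m ^ (k : ℕ)) =
      ∑ f ∈ Fintype.piFinset fun _ : Fin i => T,
        (∏ j, w (f j) * x (f j) ^ (j : ℕ)) * det (vandermonde (x ∘ f)) := by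
  have hrows : (of fun j k : Fin i => ∑ m ∈ T, w m * x m ^ (j : ℕ) * x m ^ (k : ℕ)) =
      fun j : Fin i => ∑ m ∈ T, fun k : Fin i => w m * x m ^ (j : ℕ) * x m ^ (k : ℕ) := by
    ext j k
    simp [Finset.sum_apply]
  rw [det, hrows]
  change (detRowAlternating : (Fin i → R) [⋀^Fin i]→ₗ[R] R).toMultilinearMap _ = _
  rw [MultilinearMap.map_sum_finset]
  refine sum_congr rfl fun f _ => ?_
  exact det_mul_column (fun j => w (f j) * x (f j) ^ (j : ℕ)) (vandermonde (x ∘ f))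

theorem prod_Icc_prod_Icc_eq_prod_fin_prod_Ioi {M : Type*} [CommMonoid M] (g : ℕ → ℕ → M)
    (i : ℕ) :
    ∏ k ∈ Icc 1 i, ∏ l ∈ Icc (k + 1) i, g k l =
      ∏ r : Fin i, ∏ r' ∈ Ioi r, g (r + 1) (r' + 1) := by
  have hinner : ∀ r : Fin i, ∏ r' ∈ Ioi r, g (r + 1) (r' + 1) =
      ∏ l ∈ Ioo (r : ℕ) i, g (r + 1) (l + 1) := by
    intro r
    rw [← Fin.map_valEmbedding_Ioi, prod_map]
    rfl
  simp only [hinner]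
  rw [Fin.prod_univ_eq_prod_range (fun r => ∏ l ∈ Ioo r i, g (r + 1) (l + 1)), range_eq_Ico,
    ← Ico_add_one_right_eq_Icc, ← prod_Ico_add' _ 0 i 1]
  refine prod_congr rfl fun r _ => ?_
  rw [← Ico_add_one_right_eq_Icc, ← prod_Ico_add' _ (r + 1) i 1, Ico_add_one_left_eq_Ioo]

theorem det_hankel_Icc_eq_prod_sq {R : Type*} [CommRing R] (x : ℕ → R) (i : ℕ) :
    det (of fun j k : Fin i => ∑ m ∈ Icc 1 i, x m ^ (j : ℕ) * x m ^ (k : ℕ)) =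
      ∏ k ∈ Icc 1 i, ∏ l ∈ Icc (k + 1) i, (x k - x l) ^ 2 := by
  set v : Fin i → R := fun r => x (r + 1)
  have hgram : (of fun j k : Fin i => ∑ m ∈ Icc 1 i, x m ^ (j : ℕ) * x m ^ (k : ℕ)) =
      (vandermonde v)ᵀ * vandermonde v := by
    ext j k
    rw [mul_apply, of_apply, ← Ico_add_one_right_eq_Icc, ← zero_add 1, ← sum_Ico_add' _ 0 i 1,
      ← range_eq_Ico,
      ← Fin.sum_univ_eq_sum_range (fun m => x (m + 1) ^ (j : ℕ) * x (m + 1) ^ (k : ℕ))]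
    rfl
  rw [hgram, det_mul, det_transpose, det_vandermonde, ← sq, ← prod_pow,
    prod_Icc_prod_Icc_eq_prod_fin_prod_Ioi]
  simp only [← prod_pow]
  exact prod_congr rfl fun r _ => prod_congr rfl fun r' _ => sub_sq_comm _ _

theorem prod_Icc_prod_Icc_sub_sq_ne_zero {R : Type*} [CommRing R] [IsDomain R] {x : ℕ → R} {i : ℕ}
    (hx : Set.InjOn x ↑(Icc 1 i)) :
    ∏ k ∈ Icc 1 i, ∏ l ∈ Icc (k + 1) i, (x k - x l) ^ 2 ≠ 0 := by
  refine prod_ne_zero_iff.mpr fun k hk => prod_ne_zero_iff.mpr fun l hl => ?_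
  have hl' : l ∈ Icc 1 i := mem_Icc.mpr ⟨by grind, (mem_Icc.mp hl).2⟩
  refine pow_ne_zero 2 (sub_ne_zero.mpr fun hkl => ?_)
  have := hx (mem_coe.mpr hk) (mem_coe.mpr hl') hkl
  grind

section Dominance

variable {ι : Type*} [DecidableEq ι] {w : ι → ℕ → ℝ} {T I : Finset ι}

theorem tendsto_prod_div_prod_zero {S : Finset ι} (hcard : S.card = I.card) (hne : S ≠ I)
    (hw : ∀ m ∈ I, ∀ n, w m n ≠ 0)
    (hdom : ∀ a ∈ S \ I, ∀ b ∈ I \ S, Tendsto (fun n => w a n / w b n) atTop (𝓝 0)) :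
    Tendsto (fun n => (∏ m ∈ S, w m n) / ∏ m ∈ I, w m n) atTop (𝓝 0) := by
  obtain ⟨a₀, ha₀⟩ : (S \ I).Nonempty :=
    sdiff_nonempty.mpr fun hSI => hne (eq_of_subset_of_card_le hSI hcard.ge)
  let e := equivOfCardEq (card_sdiff_comm hcard)
  have hsplit : ∀ n, (∏ m ∈ S, w m n) / ∏ m ∈ I, w m n =
      ∏ a ∈ (S \ I).attach, w a n / w (e a) n := by
    intro n
    have hcommon : ∏ m ∈ S ∩ I, w m n ≠ 0 :=
      prod_ne_zero_iff.mpr fun m hm => hw m (mem_inter.mp hm).2 n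
    rw [← prod_sdiff (inter_subset_left : S ∩ I ⊆ S), ← prod_sdiff (inter_subset_right : S ∩ I ⊆ I),
      sdiff_inter_self_left, sdiff_inter_self_right, mul_div_mul_right _ _ hcommon,
      prod_div_distrib, ← prod_attach (S \ I), ← prod_attach (I \ S)]
    congr 1
    exact (e.prod_comp fun b => w b n).symm
  simp only [hsplit]
  have := tendsto_finsetProd (S \ I).attach fun a _ => hdom a a.2 (e a) (e a).2
  rwa [prod_eq_zero (mem_attach _ ⟨a₀, ha₀⟩) rfl] at this

theorem tendsto_prod_comp_div_prod {κ : Type*} [Fintype κ] {f : κ → ι}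
    (hf : Function.Injective f) (hfT : ∀ j, f j ∈ T) (hcard : Fintype.card κ = I.card)
    (hw : ∀ m ∈ I, ∀ n, w m n ≠ 0)
    (hdom : ∀ a ∈ T \ I, ∀ b ∈ I, Tendsto (fun n => w a n / w b n) atTop (𝓝 0)) :
    Tendsto (fun n => (∏ j, w (f j) n) / ∏ m ∈ I, w m n) atTop
      (𝓝 (if ∀ j, f j ∈ I then 1 else 0)) := by
  set S := univ.image f
  have hprod : ∀ n, ∏ j, w (f j) n = ∏ m ∈ S, w m n := fun n =>
    (prod_image (f := fun m => w m n) fun a _ b _ h => hf h).symm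
  have hScard : S.card = I.card := by rw [card_image_of_injective _ hf, card_univ, hcard]
  simp only [hprod]
  by_cases hSI : S = I
  · have hfI : ∀ j, f j ∈ I := fun j => hSI ▸ mem_image_of_mem f (mem_univ j)
    rw [if_pos hfI, hSI]
    refine tendsto_const_nhds.congr fun n => (div_self ?_).symm
    exact prod_ne_zero_iff.mpr fun m hm => hw m hm n
  · have hfI : ¬ ∀ j, f j ∈ I := fun hfI =>
      hSI (eq_of_subset_of_card_le (image_subset_iff.mpr fun j _ => hfI j) hScard.ge)
    rw [if_neg hfI]
    refine tendsto_prod_div_prod_zero hScard hSI hw fun a ha b hb => hdom a ?_ b (sdiff_subset hb)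
    obtain ⟨haS, haI⟩ := mem_sdiff.mp ha
    obtain ⟨j, -, rfl⟩ := mem_image.mp haS
    exact mem_sdiff.mpr ⟨hfT j, haI⟩

theorem tendsto_det_hankel_div_prod (x : ι → ℝ) {i : ℕ} (hIT : I ⊆ T) (hI : I.card = i)
    (hw : ∀ m ∈ I, ∀ n, w m n ≠ 0)
    (hdom : ∀ a ∈ T \ I, ∀ b ∈ I, Tendsto (fun n => w a n / w b n) atTop (𝓝 0)) :
    Tendsto (fun n => det (of fun j k : Fin i => ∑ m ∈ T, w m n * x m ^ (j : ℕ) * x m ^ (k : ℕ)) /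
        ∏ m ∈ I, w m n) atTop
      (𝓝 (det (of fun j k : Fin i => ∑ m ∈ I, x m ^ (j : ℕ) * x m ^ (k : ℕ)))) := by
  set a : (Fin i → ι) → ℝ := fun f => (∏ j, x (f j) ^ (j : ℕ)) * det (vandermonde (x ∘ f))
  have hterm : ∀ f ∈ Fintype.piFinset fun _ : Fin i => T,
      Tendsto (fun n => (∏ j, w (f j) n * x (f j) ^ (j : ℕ)) * det (vandermonde (x ∘ f)) /
        ∏ m ∈ I, w m n) atTop (𝓝 (if f ∈ Fintype.piFinset fun _ : Fin i => I then a f else 0)) := by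
    intro f hf
    have hsplit : ∀ n, (∏ j, w (f j) n * x (f j) ^ (j : ℕ)) * det (vandermonde (x ∘ f)) /
        ∏ m ∈ I, w m n = (∏ j, w (f j) n) / (∏ m ∈ I, w m n) * a f := by
      intro n
      rw [prod_mul_distrib]
      ring
    simp only [hsplit]
    by_cases ha : a f = 0
    · simp [ha]
    have hinj : Function.Injective f :=
      (det_vandermonde_ne_zero_iff.mp (right_ne_zero_of_mul ha)).of_comp
    have := (tendsto_prod_comp_div_prod hinj (Fintype.mem_piFinset.mp hf)
      (by rw [Fintype.card_fin, hI]) hw hdom).mul_const (a f)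
    simpa [Fintype.mem_piFinset, apply_ite (· * a f)] using this
  have hlimit : ∑ f ∈ Fintype.piFinset (fun _ : Fin i => T),
      (if f ∈ Fintype.piFinset fun _ : Fin i => I then a f else 0) =
        det (of fun j k : Fin i => ∑ m ∈ I, x m ^ (j : ℕ) * x m ^ (k : ℕ)) := by
    rw [sum_ite_mem, inter_eq_right.mpr (Fintype.piFinset_subset _ _ fun _ => hIT)]
    simpa using (det_hankel_eq_sum_piFinset I 1 x i).symm
  rw [← hlimit]
  simp only [det_hankel_eq_sum_piFinset, sum_div]
  exact tendsto_finsetSum _ hterm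

end Dominance

noncomputable def momentWeight (lam c δ : ℕ → ℝ) (sb : ℤ) (m n : ℕ) : ℝ :=
  c m * lam m ^ sb * ∏ l ∈ range n, (1 + δ l / lam m)

theorem one_add_div_pos {x d : ℝ} (hx : 0 < x) (hxd : 0 < x + d) : 0 < 1 + d / x :=
  one_add_div hx.ne' ▸ div_pos hxd hx

theorem momentWeight_pos {lam c δ : ℕ → ℝ} (sb : ℤ) {m : ℕ} (hc : 0 < c m) (hlam : 0 < lam m)
    (hδ : ∀ l, 0 < lam m + δ l) (n : ℕ) : 0 < momentWeight lam c δ sb m n :=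
  mul_pos (mul_pos hc (zpow_pos hlam sb)) (prod_pos fun l _ => one_add_div_pos hlam (hδ l))

theorem mom_neg_add_eq_sum {N : ℕ} {lam : ℕ → ℝ} (c δ : ℕ → ℝ)
    (hlam : ∀ m ∈ Icc 1 N, lam m ≠ 0) (sb : ℤ) (j k n : ℕ) :
    mom N lam c δ (j + k) (-(n : ℤ) + sb) n =
      ∑ m ∈ Icc 1 N, momentWeight lam c δ sb m n * lam m ^ j * lam m ^ k := by
  refine sum_congr rfl fun m hm => ?_
  have hl := hlam m hm
  have hprod : ∏ l ∈ range n, (lam m + δ l) = lam m ^ n * ∏ l ∈ range n, (1 + δ l / lam m) := by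
    rw [show lam m ^ n = ∏ _l ∈ range n, lam m by simp, ← prod_mul_distrib]
    exact prod_congr rfl fun l _ => by field_simp
  rw [hprod, momentWeight, Nat.cast_add, zpow_add₀ hl, zpow_add₀ hl, zpow_add₀ hl, _root_.zpow_neg,
    zpow_natCast, zpow_natCast, zpow_natCast]
  field_simp

theorem tendsto_momentWeight_div_zero {lam δ : ℕ → ℝ} (c : ℕ → ℝ) {δs : ℝ} (sb : ℤ) {a b : ℕ}
    (ha : 0 < lam a) (hb : 0 < lam b) (hδa : ∀ l, 0 < lam a + δ l) (hδb : ∀ l, 0 < lam b + δ l)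
    (hδlim : Tendsto δ atTop (𝓝 δs)) (hab : 1 + δs / lam a < 1 + δs / lam b) :
    Tendsto (fun n => momentWeight lam c δ sb a n / momentWeight lam c δ sb b n) atTop (𝓝 0) := by
  have hprod := tendsto_prod_range_div_zero (fun l => one_add_div_pos ha (hδa l))
    (fun l => one_add_div_pos hb (hδb l))
    (tendsto_const_nhds.add (hδlim.div_const (lam a)))
    (tendsto_const_nhds.add (hδlim.div_const (lam b))) hab
  simpa [momentWeight, mul_div_mul_comm] using
    hprod.const_mul (c a * lam a ^ sb / (c b * lam b ^ sb))

theorem stmt18_general (N : ℕ) (lam c : ℕ → ℝ) (δ : ℕ → ℝ) (δs : ℝ)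
    (hlampos : ∀ j ∈ Finset.Icc 1 N, 0 < lam j)
    (hdist : ∀ j ∈ Finset.Icc 1 N, ∀ k ∈ Finset.Icc 1 N, j ≠ k → lam j ≠ lam k)
    (hcpos : ∀ j ∈ Finset.Icc 1 N, 0 < c j)
    (hδpos : ∀ j ∈ Finset.Icc 1 N, ∀ l : ℕ, 0 < lam j + δ l)
    (hδlim : Tendsto δ atTop (nhds δs))
    (hchain : ∀ j, 1 ≤ j → j < N → 1 + δs / lam (j + 1) < 1 + δs / lam j) :
    ∀ (sb : ℤ) (i : ℕ), i ≤ N - 1 →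
      Tendsto (fun n : ℕ =>
          tauH N lam c δ i (-(n : ℤ) + sb) n /
            ((∏ k ∈ Finset.Icc 1 i,
                (c k * lam k ^ sb * ∏ l ∈ Finset.range n, (1 + δ l / lam k))) *
              ∏ k ∈ Finset.Icc 1 i, ∏ l ∈ Finset.Icc (k + 1) i, (lam k - lam l) ^ 2))
        atTop (nhds 1) := by
  intro sb i hi
  have hIN : Icc 1 i ⊆ Icc 1 N := Icc_subset_Icc_right (by omega)
  have hanti : StrictAntiOn (fun j => 1 + δs / lam j) (Set.Icc 1 N) :=
    strictAntiOn_of_add_one_lt Set.ordConnected_Icc fun j _ hj hj' => hchain j hj.1 hj'.2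
  have hw : ∀ m ∈ Icc 1 i, ∀ n, momentWeight lam c δ sb m n ≠ 0 := fun m hm n =>
    (momentWeight_pos sb (hcpos m (hIN hm)) (hlampos m (hIN hm)) (hδpos m (hIN hm)) n).ne'
  have hdom : ∀ a ∈ Icc 1 N \ Icc 1 i, ∀ b ∈ Icc 1 i, Tendsto
      (fun n => momentWeight lam c δ sb a n / momentWeight lam c δ sb b n) atTop (𝓝 0) := by
    intro a ha b hb
    obtain ⟨haN, hai⟩ := mem_sdiff.mp ha
    have hba : b < a := by simp only [mem_Icc] at hb haN hai; omega
    exact tendsto_momentWeight_div_zero c sb (hlampos a haN) (hlampos b (hIN hb)) (hδpos a haN)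
      (hδpos b (hIN hb)) hδlim (hanti (coe_Icc 1 N ▸ hIN hb) (coe_Icc 1 N ▸ haN) hba)
  have hV := prod_Icc_prod_Icc_sub_sq_ne_zero (x := lam) fun k hk l hl hkl =>
    by_contra fun hne => hdist k (hIN (mem_coe.mp hk)) l (hIN (mem_coe.mp hl)) hne hkl
  have hlim := (tendsto_det_hankel_div_prod (i := i) lam hIN (by simp) hw hdom).div_const
    (∏ k ∈ Icc 1 i, ∏ l ∈ Icc (k + 1) i, (lam k - lam l) ^ 2)
  rw [det_hankel_Icc_eq_prod_sq, div_self hV] at hlim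
  refine hlim.congr fun n => ?_
  simp only [tauH, mom_neg_add_eq_sum c δ fun m hm => (hlampos m hm).ne', div_div]
  rfl

theorem stmt18 (N : ℕ) (hN : 1 ≤ N) (lam c : ℕ → ℝ) (δ : ℕ → ℝ) (δs : ℝ)
    (hlampos : ∀ j ∈ Finset.Icc 1 N, 0 < lam j)
    (hdist : ∀ j ∈ Finset.Icc 1 N, ∀ k ∈ Finset.Icc 1 N, j ≠ k → lam j ≠ lam k)
    (hcpos : ∀ j ∈ Finset.Icc 1 N, 0 < c j)
    (hδpos : ∀ j ∈ Finset.Icc 1 N, ∀ l : ℕ, 0 < lam j + δ l)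
    (hδlim : Tendsto δ atTop (nhds δs))
    (hchain : ∀ j, 1 ≤ j → j < N → 1 + δs / lam (j + 1) < 1 + δs / lam j)
    (hlast : 0 < 1 + δs / lam N) :
    ∀ (sb : ℤ) (i : ℕ), i ≤ N - 1 →
      Tendsto (fun n : ℕ =>
          tauH N lam c δ i (-(n : ℤ) + sb) n /
            ((∏ k ∈ Finset.Icc 1 i,
                (c k * lam k ^ sb * ∏ l ∈ Finset.range n, (1 + δ l / lam k))) *
              ∏ k ∈ Finset.Icc 1 i, ∏ l ∈ Finset.Icc (k + 1) i, (lam k - lam l) ^ 2))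
        atTop (nhds 1) :=
  stmt18_general N lam c δ δs hlampos hdist hcpos hδpos hδlim hchain
end
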